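/- arXiv:1812.02087 — 4 statements merged into one kernel-verified Lean document; each statement's English description precedes it below -/
import Mathlib

section
/- For any two-qubit unitary U acting on ℂ²⊗ℂ², there exists a product state |ψ⟩ = |a⟩⊗|b⟩ (with |a⟩, |b⟩ unit vectors in ℂ²) such that U|ψ⟩ is also a product state. -/
open Matrix

noncomputable section

/-- A vector in ℂ² (qubit). -/
abbrev QVec := Fin 2 → ℂ

/-- A vector in ℂ²⊗ℂ² ≅ ℂ⁴, indexed by pairs. -/
abbrev QVec2 := Fin 2 × Fin 2 → ℂ

/-- Tensor (product) of two qubit vectors. -/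
def prodVec (v w : QVec) : QVec2 := fun p => v p.1 * w p.2

/-- A vector of ℂ²⊗ℂ² is a product state if it is a tensor product of two vectors. -/
def IsProdState (ψ : QVec2) : Prop := ∃ v w : QVec, ψ = prodVec v w

lemma isProdState_of_det (ψ : QVec2)
    (h : ψ (0,0) * ψ (1,1) = ψ (0,1) * ψ (1,0)) : IsProdState ψ := by
  by_cases h00 : ψ (0,0) = 0
  · by_cases h11 : ψ (1,1) = 0
    · have h0 : ψ 0 = 0 := h00
      have h1 : ψ 1 = 0 := h11
      rw [h00, h11, zero_mul] at h
      rcases mul_eq_zero.mp h.symm with h01 | h10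
      · refine ⟨![0, ψ (1,0)], ![1, 0], funext fun p => ?_⟩
        obtain ⟨i, j⟩ := p
        fin_cases i <;> fin_cases j <;>
          simp [prodVec, h00, h11, h01, h0, h1]
      · refine ⟨![ψ (0,1), 0], ![0, 1], funext fun p => ?_⟩
        obtain ⟨i, j⟩ := p
        fin_cases i <;> fin_cases j <;>
          simp [prodVec, h00, h11, h10, h0, h1]
    · refine ⟨![ψ (0,1), ψ (1,1)], ![ψ (1,0) / ψ (1,1), 1], funext fun p => ?_⟩
      obtain ⟨i, j⟩ := p
      fin_cases i <;> fin_cases j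
      · show ψ (0,0) = ψ (0,1) * (ψ (1,0) / ψ (1,1))
        rw [← mul_div_assoc, eq_div_iff h11]
        linear_combination h
      · show ψ (0,1) = ψ (0,1) * 1
        rw [mul_one]
      · show ψ (1,0) = ψ (1,1) * (ψ (1,0) / ψ (1,1))
        rw [← mul_div_assoc]
        exact (mul_div_cancel_left₀ _ h11).symm
      · show ψ (1,1) = ψ (1,1) * 1
        rw [mul_one]
  · refine ⟨![ψ (0,0), ψ (1,0)], ![1, ψ (0,1) / ψ (0,0)], funext fun p => ?_⟩
    obtain ⟨i, j⟩ := p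
    fin_cases i <;> fin_cases j
    · show ψ (0,0) = ψ (0,0) * 1
      rw [mul_one]
    · show ψ (0,1) = ψ (0,0) * (ψ (0,1) / ψ (0,0))
      rw [← mul_div_assoc]
      exact (mul_div_cancel_left₀ _ h00).symm
    · show ψ (1,0) = ψ (1,0) * 1
      rw [mul_one]
    · show ψ (1,1) = ψ (1,0) * (ψ (0,1) / ψ (0,0))
      rw [← mul_div_assoc, eq_div_iff h00]
      linear_combination h

lemma quad_root (α β γ : ℂ) :
    ∃ x y : ℂ, (x ≠ 0 ∨ y ≠ 0) ∧ α * x ^ 2 + β * (x * y) + γ * y ^ 2 = 0 := by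
  by_cases hα : α = 0
  · exact ⟨1, 0, Or.inl one_ne_zero, by simp [hα]⟩
  · obtain ⟨z, hz⟩ := Complex.exists_root (f := Polynomial.C α * Polynomial.X ^ 2
      + Polynomial.C β * Polynomial.X + Polynomial.C γ)
      (by rw [Polynomial.degree_quadratic hα]; norm_num)
    refine ⟨z, 1, Or.inr one_ne_zero, ?_⟩
    simp only [Polynomial.IsRoot, Polynomial.eval_add, Polynomial.eval_mul,
      Polynomial.eval_pow, Polynomial.eval_C, Polynomial.eval_X] at hz
    linear_combination hz

/-- For any two-qubit unitary `U` there is a product state `|a⟩⊗|b⟩` (with `a`, `b`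
unit vectors) such that `U (|a⟩⊗|b⟩)` is again a product state. -/
theorem exists_product_state_mapped_to_product
    (U : Matrix (Fin 2 × Fin 2) (Fin 2 × Fin 2) ℂ)
    (hU : U ∈ Matrix.unitaryGroup (Fin 2 × Fin 2) ℂ) :
    ∃ a b : QVec, star a ⬝ᵥ a = 1 ∧ star b ⬝ᵥ b = 1 ∧
      IsProdState (U.mulVec (prodVec a b)) := by
  obtain ⟨x, y, hxy, hroot⟩ := quad_root
    (U (0,0) (0,0) * U (1,1) (0,0) - U (0,1) (0,0) * U (1,0) (0,0))
    (U (0,0) (0,0) * U (1,1) (0,1) + U (0,0) (0,1) * U (1,1) (0,0)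
      - U (0,1) (0,0) * U (1,0) (0,1) - U (0,1) (0,1) * U (1,0) (0,0))
    (U (0,0) (0,1) * U (1,1) (0,1) - U (0,1) (0,1) * U (1,0) (0,1))
  set n : ℝ := Complex.normSq x + Complex.normSq y with hn
  have hnpos : 0 < n := by
    rcases hxy with hx | hy
    · have := Complex.normSq_pos.mpr hx
      have := Complex.normSq_nonneg y
      linarith
    · have := Complex.normSq_pos.mpr hy
      have := Complex.normSq_nonneg x
      linarith
  set s : ℝ := Real.sqrt n with hs
  have hspos : 0 < s := Real.sqrt_pos.mpr hnpos
  have hs2 : s * s = n := Real.mul_self_sqrt hnpos.le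
  have hsC : (s : ℂ) ≠ 0 := by exact_mod_cast hspos.ne'
  have key : ∀ z : ℂ, star (z / (s:ℂ)) * (z / (s:ℂ))
      = (Complex.normSq z : ℂ) / ((s:ℂ) * (s:ℂ)) := by
    intro z
    rw [Complex.star_def, map_div₀, Complex.conj_ofReal, Complex.normSq_eq_conj_mul_self]
    ring
  refine ⟨![1, 0], ![x / s, y / s], ?_, ?_, ?_⟩
  · simp [dotProduct, Fin.sum_univ_two]
  · simp only [dotProduct, Fin.sum_univ_two, Pi.star_apply, Matrix.cons_val_zero,
      Matrix.cons_val_one, Matrix.head_cons]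
    rw [key, key, ← add_div, div_eq_one_iff_eq (by exact_mod_cast (mul_pos hspos hspos).ne')]
    norm_cast
    linarith [hs2, hn]
  · apply isProdState_of_det
    have hmv : ∀ p, (U.mulVec (prodVec ![1, 0] ![x / s, y / s])) p
        = U p (0,0) * (x / s) + U p (0,1) * (y / s) := by
      intro p
      simp [Matrix.mulVec, dotProduct, prodVec, Fintype.sum_prod_type, Fin.sum_univ_two]
    rw [hmv, hmv, hmv, hmv]
    field_simp
    linear_combination hroot
end
end

section
/- Let |Φ₁⟩=(|00⟩+|11⟩)/√2, |Φ₂⟩=(|00⟩−|11⟩)/√2, |Φ₃⟩=(|01⟩−|10⟩)/√2, |Φ₄⟩=(|01⟩+|10⟩)/√2 be the magic basis of ℂ²⊗ℂ². A unit vector |ψ⟩ = Σⱼ αⱼ|Φⱼ⟩ with αⱼ ∈ ℂ is a product state (i.e., has Schmidt rank 1) if and only if α₁² − α₂² + α₃² − α₄² = 0. -/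
/-!
In the computational basis the amplitudes of `∑ αⱼ Φⱼ` form the 2 × 2 matrix
`(√2)⁻¹ [[α₀ + α₁, α₂ + α₃], [α₃ − α₂, α₀ − α₁]]`. A two-qubit vector is a product state exactly
when this amplitude matrix has rank at most one, i.e. vanishing determinant, and here the
determinant is `(α₀² − α₁² + α₂² − α₃²) / 2`.
-/

open Matrix

noncomputable section

/-- Computational basis vector `|a⟩|b⟩` of ℂ²⊗ℂ². -/
def ket (a b : Fin 2) : QVec2 := fun p => if p = (a, b) then 1 else 0

/-- The magic (Bell) basis of ℂ²⊗ℂ². -/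
def magic : Fin 4 → QVec2
  | 0 => ((Real.sqrt 2 : ℂ))⁻¹ • (ket 0 0 + ket 1 1)
  | 1 => ((Real.sqrt 2 : ℂ))⁻¹ • (ket 0 0 - ket 1 1)
  | 2 => ((Real.sqrt 2 : ℂ))⁻¹ • (ket 0 1 - ket 1 0)
  | 3 => ((Real.sqrt 2 : ℂ))⁻¹ • (ket 0 1 + ket 1 0)

/- A vanishing 2 × 2 determinant makes one column a multiple of the other, unless the first
column is zero. -/
theorem exists_mul_eq_of_mul_eq_mul {K : Type*} [Field K] {a b c d : K} (h : a * d = b * c) :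
    ∃ v w : Fin 2 → K, v 0 * w 0 = a ∧ v 0 * w 1 = b ∧ v 1 * w 0 = c ∧ v 1 * w 1 = d := by
  by_cases ha : a = 0
  · by_cases hc : c = 0
    · exact ⟨![b, d], ![0, 1], by simp [ha], by simp, by simp [hc], by simp⟩
    refine ⟨![a, c], ![1, d / c], by simp, ?_, by simp, by simpa using mul_div_cancel₀ d hc⟩
    simp only [cons_val_zero, cons_val_one]
    field_simp
    linear_combination h
  refine ⟨![a, c], ![1, b / a], by simp, by simpa using mul_div_cancel₀ b ha, by simp, ?_⟩
  simp only [cons_val_zero, cons_val_one]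
  field_simp
  linear_combination -h

theorem exists_eq_mul_iff_mul_eq_mul {K : Type*} [Field K] (ψ : Fin 2 × Fin 2 → K) :
    (∃ v w : Fin 2 → K, ∀ i j, ψ (i, j) = v i * w j) ↔
      ψ (0, 0) * ψ (1, 1) = ψ (0, 1) * ψ (1, 0) := by
  constructor
  · rintro ⟨v, w, hψ⟩
    simp only [hψ]
    ring
  · intro h
    obtain ⟨v, w, h00, h01, h10, h11⟩ := exists_mul_eq_of_mul_eq_mul h
    refine ⟨v, w, fun i j => ?_⟩
    fin_cases i <;> fin_cases j
    exacts [h00.symm, h01.symm, h10.symm, h11.symm]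

theorem isProdState_iff (ψ : QVec2) :
    IsProdState ψ ↔ ψ (0, 0) * ψ (1, 1) = ψ (0, 1) * ψ (1, 0) := by
  rw [IsProdState, ← exists_eq_mul_iff_mul_eq_mul]
  simp only [funext_iff, Prod.forall, prodVec]

theorem sum_smul_magic_apply (α : Fin 4 → ℂ) (i j : Fin 2) :
    (∑ k, α k • magic k) (i, j) =
      (Real.sqrt 2 : ℂ)⁻¹ * !![α 0 + α 1, α 2 + α 3; α 3 - α 2, α 0 - α 1] i j := by
  fin_cases i <;> fin_cases j <;>
    simp [Fin.sum_univ_four, magic, ket] <;> ring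

theorem product_iff_magic_coeffs_general (α : Fin 4 → ℂ) :
    IsProdState (∑ j, α j • magic j) ↔
      α 0 ^ 2 - α 1 ^ 2 + α 2 ^ 2 - α 3 ^ 2 = 0 := by
  have hs : (Real.sqrt 2 : ℂ)⁻¹ * (Real.sqrt 2 : ℂ)⁻¹ ≠ 0 := by simp
  simp only [isProdState_iff, sum_smul_magic_apply, of_apply, cons_val', cons_val_zero,
    cons_val_one, empty_val', cons_val_fin_one, mul_mul_mul_comm _ (α 0 + α 1),
    mul_mul_mul_comm _ (α 2 + α 3), mul_right_inj' hs]
  constructor <;> intro h <;> linear_combination h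

/-- A unit vector `ψ = Σⱼ αⱼ |Φⱼ⟩` expanded in the magic basis is a product state
iff `α₁² − α₂² + α₃² − α₄² = 0` (squares of complex numbers). -/
theorem product_iff_magic_coeffs (α : Fin 4 → ℂ)
    (hnorm : ∑ j, ‖α j‖ ^ 2 = 1) :
    IsProdState (∑ j, α j • magic j) ↔
      α 0 ^ 2 - α 1 ^ 2 + α 2 ^ 2 - α 3 ^ 2 = 0 :=
  product_iff_magic_coeffs_general α
end
end

section
/- Helstrom bound: for two density operators ρ₁, ρ₂ on a finite-dimensional Hilbert space with prior probabilities q₁, q₂ (q₁+q₂=1), the maximum over POVMs {Π₁, Π₂} (Πᵢ ≥ 0, Π₁+Π₂=I) of q₁Tr[ρ₁Π₁] + q₂Tr[ρ₂Π₂] equals (1/2)(1 + ‖q₁ρ₁ − q₂ρ₂‖₁). -/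
open Matrix ComplexOrder

noncomputable section

/-- Trace norm `‖A‖₁ = Tr √(AᴴA)` of a complex matrix. -/
def traceNorm {n : Type*} [Fintype n] [DecidableEq n] (A : Matrix n n ℂ) : ℝ :=
  (((Matrix.posSemidef_conjTranspose_mul_self A).isHermitian.eigenvectorUnitary.1 *
      diagonal (((↑) : ℝ → ℂ) ∘ (Real.sqrt ·) ∘
        (Matrix.posSemidef_conjTranspose_mul_self A).isHermitian.eigenvalues) *
      (star (Matrix.posSemidef_conjTranspose_mul_self A).isHermitian.eigenvectorUnitary :
        Matrix n n ℂ)).trace).re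

lemma diag_re_nonneg' {n : Type*} [Fintype n] [DecidableEq n]
    {M : Matrix n n ℂ} (hM : M.PosSemidef) (i : n) : 0 ≤ (M i i).re := by
  have := hM.re_dotProduct_nonneg (Pi.single i 1)
  simpa [dotProduct, mulVec, Pi.single_apply, Finset.sum_ite_eq, mul_comm] using this

lemma trace_diagonal_mul' {n : Type*} [Fintype n] [DecidableEq n]
    (d : n → ℂ) (M : Matrix n n ℂ) :
    (diagonal d * M).trace = ∑ i, d i * M i i := by
  simp [Matrix.trace, Matrix.diag, Matrix.mul_apply, Matrix.diagonal_apply, Finset.sum_ite_eq]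

/-- Helstrom bound: for density operators `ρ₁, ρ₂` with priors `q₁, q₂`, the maximal
success probability `q₁ Tr[ρ₁Π₁] + q₂ Tr[ρ₂Π₂]` over two-outcome POVMs equals
`(1/2)(1 + ‖q₁ρ₁ − q₂ρ₂‖₁)`. -/
theorem helstrom_bound {n : Type*} [Fintype n] [DecidableEq n]
    (ρ₁ ρ₂ : Matrix n n ℂ) (h₁ : ρ₁.PosSemidef) (h₂ : ρ₂.PosSemidef)
    (ht₁ : ρ₁.trace = 1) (ht₂ : ρ₂.trace = 1)
    (q₁ q₂ : ℝ) (hq₁ : 0 ≤ q₁) (hq₂ : 0 ≤ q₂) (hsum : q₁ + q₂ = 1) :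
    IsGreatest
      { x : ℝ | ∃ P₁ P₂ : Matrix n n ℂ, P₁.PosSemidef ∧ P₂.PosSemidef ∧
          P₁ + P₂ = 1 ∧ x = q₁ * ((ρ₁ * P₁).trace).re + q₂ * ((ρ₂ * P₂).trace).re }
      (1 / 2 * (1 + traceNorm ((q₁ : ℂ) • ρ₁ - (q₂ : ℂ) • ρ₂))) := by
  set Δ : Matrix n n ℂ := (q₁ : ℂ) • ρ₁ - (q₂ : ℂ) • ρ₂ with hΔdef
  have hΔ : Δ.IsHermitian := by
    unfold Matrix.IsHermitian
    simp [hΔdef, conjTranspose_smul, h₁.1.eq, h₂.1.eq, Complex.star_def, Complex.conj_ofReal]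
  set μ : n → ℝ := hΔ.eigenvalues with hμdef
  set V : Matrix n n ℂ := (hΔ.eigenvectorUnitary : Matrix n n ℂ) with hVdef
  have hVV : star V * V = 1 :=
    (Matrix.mem_unitaryGroup_iff').mp hΔ.eigenvectorUnitary.2
  have hVV' : V * star V = 1 :=
    (Matrix.mem_unitaryGroup_iff).mp hΔ.eigenvectorUnitary.2
  have hspec : Δ = V * diagonal (fun i => (μ i : ℂ)) * star V := hΔ.spectral_theorem
  have trace_conj : ∀ (d : n → ℂ), (V * diagonal d * star V).trace = ∑ i, d i := by
    intro d
    rw [Matrix.trace_mul_cycle, hVV, Matrix.one_mul, Matrix.trace_diagonal]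
  have hVcancel : ∀ X : Matrix n n ℂ, star V * (V * X) = X := by
    intro X; rw [← Matrix.mul_assoc, hVV, Matrix.one_mul]
  have key : ∀ E F : Matrix n n ℂ, (V * E * star V) * (V * F * star V) = V * (E * F) * star V := by
    intro E F; simp only [Matrix.mul_assoc, hVcancel]
  -- trace norm = sum of absolute eigenvalues
  have htn : traceNorm Δ = ∑ i, |μ i| := by
    set B : Matrix n n ℂ := V * diagonal (fun i => Complex.ofReal |μ i|) * star V with hBdef
    have hdPSD : (diagonal (fun i => Complex.ofReal |μ i|)).PosSemidef :=
      posSemidef_diagonal_iff.mpr fun i => Complex.zero_le_real.mpr (abs_nonneg _)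
    have hBPSD : B.PosSemidef := by
      have := hdPSD.mul_mul_conjTranspose_same V
      simpa [hBdef, Matrix.star_eq_conjTranspose] using this
    have hdd : diagonal (fun i => Complex.ofReal |μ i|) * diagonal (fun i => Complex.ofReal |μ i|)
        = diagonal (fun i => (μ i : ℂ)) * diagonal (fun i => (μ i : ℂ)) := by
      rw [diagonal_mul_diagonal, diagonal_mul_diagonal]
      have : (fun i => Complex.ofReal |μ i| * Complex.ofReal |μ i|)
          = fun i => (μ i : ℂ) * (μ i : ℂ) := by
        funext i
        rw [← Complex.ofReal_mul, ← Complex.ofReal_mul, ← abs_mul, abs_mul_self]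
      rw [this]
    have hsq : B ^ 2 = Δᴴ * Δ := by
      rw [hΔ.eq, pow_two, hBdef, hspec, key, key, hdd]
    have heq : (posSemidef_conjTranspose_mul_self Δ).isHermitian.cfc Real.sqrt = B := by
      rw [← IsHermitian.cfc_eq, hΔ.eq, ← pow_two]
      have hc := cfc_comp_pow Real.sqrt 2 Δ (ha := hΔ)
      rw [show (fun x : ℝ => Real.sqrt (x ^ 2)) = abs from
        funext fun x => Real.sqrt_sq_eq_abs x] at hc
      refine hc.symm.trans ?_
      rw [IsHermitian.cfc_eq hΔ, IsHermitian.cfc, Unitary.conjStarAlgAut_apply, hBdef]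
      rfl
    have htn' : traceNorm Δ
        = (((posSemidef_conjTranspose_mul_self Δ).isHermitian.cfc Real.sqrt).trace).re := by
      unfold traceNorm; rw [IsHermitian.cfc, Unitary.conjStarAlgAut_apply]; rfl
    rw [htn', heq, hBdef, trace_conj, ← Complex.ofReal_sum, Complex.ofReal_re]
  -- sum of eigenvalues = q₁ - q₂
  have htr : ∑ i, μ i = q₁ - q₂ := by
    have h1 : Δ.trace = ∑ i, (μ i : ℂ) := by rw [hspec, trace_conj]
    have h2 : Δ.trace = (q₁ : ℂ) - q₂ := by
      rw [hΔdef, Matrix.trace_sub, Matrix.trace_smul, Matrix.trace_smul, ht₁, ht₂]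
      simp
    have h3 : ((∑ i, μ i : ℝ) : ℂ) = ((q₁ - q₂ : ℝ) : ℂ) := by
      push_cast
      rw [← h1, h2]
    exact_mod_cast h3
  -- generic success probability formula
  have hx : ∀ P₁ : Matrix n n ℂ,
      q₁ * ((ρ₁ * P₁).trace).re + q₂ * ((ρ₂ * (1 - P₁)).trace).re
        = q₂ + ∑ i, μ i * ((star V * P₁ * V) i i).re := by
    intro P₁
    have step2 : ((Δ * P₁).trace).re = ∑ i, μ i * ((star V * P₁ * V) i i).re := by
      have e1 : (Δ * P₁).trace
          = (diagonal (fun i => (μ i : ℂ)) * (star V * P₁ * V)).trace := by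
        calc (Δ * P₁).trace
            = (V * (diagonal (fun i => (μ i : ℂ)) * (star V * P₁))).trace := by
              rw [hspec]; simp only [Matrix.mul_assoc]
          _ = ((diagonal (fun i => (μ i : ℂ)) * (star V * P₁)) * V).trace :=
              Matrix.trace_mul_comm _ _
          _ = (diagonal (fun i => (μ i : ℂ)) * (star V * P₁ * V)).trace := by
              simp only [Matrix.mul_assoc]
      rw [e1, trace_diagonal_mul', Complex.re_sum]
      exact Finset.sum_congr rfl fun i _ => Complex.re_ofReal_mul _ _
    have step1 : ((Δ * P₁).trace).re
        = q₁ * ((ρ₁ * P₁).trace).re - q₂ * ((ρ₂ * P₁).trace).re := by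
      rw [hΔdef, Matrix.sub_mul, Matrix.smul_mul, Matrix.smul_mul, Matrix.trace_sub,
        Matrix.trace_smul, Matrix.trace_smul]
      simp [Complex.re_ofReal_mul]
    have step3 : ((ρ₂ * (1 - P₁)).trace).re = 1 - ((ρ₂ * P₁).trace).re := by
      rw [Matrix.mul_sub, Matrix.mul_one, Matrix.trace_sub, ht₂]
      simp
    rw [step3, ← step2, step1]; ring
  -- value identity
  have hval : q₂ + ∑ i, max (μ i) 0 = 1 / 2 * (1 + ∑ i, |μ i|) := by
    have hmax : ∀ i : n, max (μ i) 0 = (μ i + |μ i|) / 2 := by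
      intro i
      rcases le_total 0 (μ i) with h | h
      · rw [max_eq_left h, abs_of_nonneg h]; ring
      · rw [max_eq_right h, abs_of_nonpos h]; ring
    rw [Finset.sum_congr rfl fun i _ => hmax i, ← Finset.sum_div, Finset.sum_add_distrib, htr]
    linarith
  constructor
  · -- membership
    classical
    set e : n → ℂ := fun i => if 0 ≤ μ i then 1 else 0 with hedef
    refine ⟨V * diagonal e * star V, V * diagonal (fun i => 1 - e i) * star V, ?_, ?_, ?_, ?_⟩
    · have hd : (diagonal e).PosSemidef := posSemidef_diagonal_iff.mpr fun i => by
        by_cases h : 0 ≤ μ i <;> simp [hedef, h]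
      simpa [Matrix.star_eq_conjTranspose] using hd.mul_mul_conjTranspose_same V
    · have hd : (diagonal (fun i => 1 - e i)).PosSemidef := posSemidef_diagonal_iff.mpr fun i => by
        by_cases h : 0 ≤ μ i <;> simp [hedef, h]
      simpa [Matrix.star_eq_conjTranspose] using hd.mul_mul_conjTranspose_same V
    · have hde : diagonal e + diagonal (fun i => 1 - e i) = (1 : Matrix n n ℂ) := by
        rw [diagonal_add, ← diagonal_one]
        congr 1
        funext i; simp
      rw [← Matrix.add_mul, ← Matrix.mul_add, hde, Matrix.mul_one, hVV']
    · have h12 : V * diagonal (fun i => 1 - e i) * star V = 1 - V * diagonal e * star V := by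
        have : diagonal (fun i => 1 - e i) = 1 - diagonal e := by
          rw [← diagonal_one, ← diagonal_sub]
        rw [this, Matrix.mul_sub, Matrix.mul_one, Matrix.sub_mul, hVV']
      rw [h12, hx (V * diagonal e * star V)]
      have hM : star V * (V * diagonal e * star V) * V = diagonal e := by
        calc star V * (V * diagonal e * star V) * V
            = star V * (V * (diagonal e * (star V * V))) := by simp only [Matrix.mul_assoc]
          _ = diagonal e := by rw [hVV, Matrix.mul_one, hVcancel]
      rw [hM]
      have : ∀ i : n, μ i * ((diagonal e) i i).re = max (μ i) 0 := by
        intro i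
        rcases le_or_gt 0 (μ i) with h | h
        · simp [hedef, diagonal_apply_eq, h, max_eq_left h]
        · simp [hedef, diagonal_apply_eq, not_le.mpr h, max_eq_right h.le]
      rw [Finset.sum_congr rfl fun i _ => this i, hval, htn]
  · -- upper bound
    rintro x ⟨P₁, P₂, hP1, hP2, hP12, rfl⟩
    have hP2' : P₂ = 1 - P₁ := by rw [← hP12]; abel
    rw [hP2', hx P₁, htn]
    have hMpsd : (star V * P₁ * V).PosSemidef := by
      have := hP1.mul_mul_conjTranspose_same (star V)
      simpa [Matrix.star_eq_conjTranspose, conjTranspose_conjTranspose] using this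
    have hNpsd : (star V * P₂ * V).PosSemidef := by
      have := hP2.mul_mul_conjTranspose_same (star V)
      simpa [Matrix.star_eq_conjTranspose, conjTranspose_conjTranspose] using this
    have hMN : star V * P₁ * V + star V * P₂ * V = 1 := by
      rw [← Matrix.add_mul, ← Matrix.mul_add, hP12, Matrix.mul_one, hVV]
    have hle : ∀ i : n, μ i * ((star V * P₁ * V) i i).re ≤ max (μ i) 0 := by
      intro i
      have h0 : 0 ≤ ((star V * P₁ * V) i i).re := diag_re_nonneg' hMpsd i
      have h1 : ((star V * P₁ * V) i i).re ≤ 1 := by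
        have hsum' : ((star V * P₁ * V) i i).re + ((star V * P₂ * V) i i).re = 1 := by
          have := congrArg (fun M : Matrix n n ℂ => (M i i).re) hMN
          simpa [Matrix.add_apply, Matrix.one_apply_eq] using this
        have := diag_re_nonneg' hNpsd i
        linarith
      rcases le_or_gt 0 (μ i) with h | h
      · calc μ i * ((star V * P₁ * V) i i).re ≤ μ i * 1 := by
              exact mul_le_mul_of_nonneg_left h1 h
          _ = μ i := mul_one _
          _ ≤ max (μ i) 0 := le_max_left _ _
      · calc μ i * ((star V * P₁ * V) i i).re ≤ 0 :=
              mul_nonpos_of_nonpos_of_nonneg h.le h0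
          _ ≤ max (μ i) 0 := le_max_right _ _
    calc q₂ + ∑ i, μ i * ((star V * P₁ * V) i i).re
        ≤ q₂ + ∑ i, max (μ i) 0 := by
          gcongr with i hi
          · exact hle i
      _ = 1 / 2 * (1 + ∑ i, |μ i|) := hval
end
end

section
/- Let U be a two-qubit unitary and |ψ⟩ a unit vector such that U|ψ⟩ = μ|c⟩|d⟩ + √(1−μ²)|c⊥⟩|d⊥⟩ with μ ∈ (0,1) (entangled). Then there is no nonzero operator K on ℂ² with K†K not proportional to the identity such that (K⊗I)U|ψ⟩⟨ψ|U†(K⊗I)† is orthogonal (trace of product zero) to (K⊗I)(I − U|ψ⟩⟨ψ|U†)(K⊗I)†. -/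
open Matrix Kronecker

noncomputable section

def outer (v : QVec2) : Matrix (Fin 2 × Fin 2) (Fin 2 × Fin 2) ℂ :=
  vecMulVec v (star v)

/-
Put `φ = U ψ` and `M = K ⊗ I`. The trace equals `⟨x|(1 - |φ⟩⟨φ|)|x⟩` for `x = M†M φ`, the squared
norm of the component of `x` orthogonal to `φ`; so it vanishes only if `(K†K ⊗ I) φ = κ φ`.
Contracting Bob's factor against `⟨d|` and `⟨d⊥|`, which is possible because both Schmidt
coefficients are nonzero, shows that `c` and `c⊥` are eigenvectors of `K†K` for the same
eigenvalue `κ`; as they form an orthonormal basis, `K†K = κ I`.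
-/

open scoped ComplexOrder

namespace Matrix

variable {𝕜 n : Type*} [RCLike 𝕜] [Fintype n]

theorem trace_conj_vecMulVec_star_mul (M N : Matrix n n 𝕜) (φ : n → 𝕜) :
    (M * vecMulVec φ (star φ) * Mᴴ * N).trace = star (M *ᵥ φ) ⬝ᵥ N *ᵥ (M *ᵥ φ) := by
  rw [mul_vecMulVec, vecMulVec_mul, vecMulVec_mul, trace_vecMulVec, dotProduct_comm,
    ← dotProduct_mulVec, star_mulVec]

theorem eq_smul_of_dotProduct_one_sub_vecMulVec_eq_zero [DecidableEq n] {φ x : n → 𝕜}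
    (hφ : star φ ⬝ᵥ φ = 1) (h : star x ⬝ᵥ (1 - vecMulVec φ (star φ)) *ᵥ x = 0) :
    x = (star φ ⬝ᵥ x) • φ := by
  set y := x - (star φ ⬝ᵥ x) • φ
  have hφy : star φ ⬝ᵥ y = 0 := by
    simp only [y, dotProduct_sub, dotProduct_smul, hφ, smul_eq_mul, mul_one, sub_self]
  have hy : star y ⬝ᵥ y = 0 := by
    have hRx : (1 - vecMulVec φ (star φ)) *ᵥ x = y := by
      rw [sub_mulVec, one_mulVec, vecMulVec_mulVec, op_smul_eq_smul]
    rw [hRx] at h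
    simp only [y, star_sub, sub_dotProduct, h, star_smul, smul_dotProduct, hφy, smul_zero,
      sub_zero]
  exact sub_eq_zero.mp (dotProduct_star_self_eq_zero.mp hy)

theorem conjTranspose_mul_self_mulVec_eq_smul_of_trace_eq_zero [DecidableEq n]
    {M : Matrix n n 𝕜} {φ : n → 𝕜} (hφ : star φ ⬝ᵥ φ = 1)
    (h : (M * vecMulVec φ (star φ) * Mᴴ * (M * (1 - vecMulVec φ (star φ)) * Mᴴ)).trace = 0) :
    ∃ κ : 𝕜, (Mᴴ * M) *ᵥ φ = κ • φ := by
  refine ⟨_, eq_smul_of_dotProduct_one_sub_vecMulVec_eq_zero hφ ?_⟩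
  rw [trace_conj_vecMulVec_star_mul, ← mulVec_mulVec, ← mulVec_mulVec, dotProduct_mulVec] at h
  rwa [← mulVec_mulVec, star_mulVec, conjTranspose_conjTranspose]

theorem eq_smul_one_of_mulVec_orthonormal [DecidableEq n] {Q : Matrix n n 𝕜} {κ : 𝕜}
    (v : n → n → 𝕜) (hv : ∀ i j, star (v i) ⬝ᵥ v j = (1 : Matrix n n 𝕜) i j)
    (hQ : ∀ i, Q *ᵥ v i = κ • v i) : Q = κ • 1 := by
  set V : Matrix n n 𝕜 := (of v)ᵀ
  have hV : V * Vᴴ = 1 := mul_eq_one_comm.mp <| by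
    ext i j
    simpa [V, mul_apply, dotProduct] using hv i j
  have hQV : Q * V = κ • V := by
    ext i j
    simpa [V, mulVec, dotProduct, mul_apply] using congrFun (hQ j) i
  calc Q = Q * V * Vᴴ := by rw [Matrix.mul_assoc, hV, Matrix.mul_one]
    _ = κ • 1 := by rw [hQV, smul_mul, hV]

theorem conjTranspose_kronecker_one_mul_self {l p : Type*} [Fintype l] [DecidableEq n]
    (K : Matrix l p 𝕜) :
    (K ⊗ₖ (1 : Matrix n n 𝕜))ᴴ * (K ⊗ₖ (1 : Matrix n n 𝕜)) = (Kᴴ * K) ⊗ₖ (1 : Matrix n n 𝕜) := by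
  rw [conjTranspose_kronecker, conjTranspose_one, ← mul_kronecker_mul, Matrix.one_mul]

end Matrix

theorem kronecker_one_mulVec_prodVec (Q : Matrix (Fin 2) (Fin 2) ℂ) (a b : QVec) :
    (Q ⊗ₖ (1 : Matrix (Fin 2) (Fin 2) ℂ)) *ᵥ prodVec a b = prodVec (Q *ᵥ a) b := by
  ext ⟨i, j⟩
  simp [mulVec, dotProduct, prodVec, Fintype.sum_prod_type, one_apply]
  ring

def contractSnd {m n : Type*} [Fintype n] (w : n → ℂ) : (m × n → ℂ) →ₗ[ℂ] (m → ℂ) where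
  toFun v i := ∑ j, star (w j) * v (i, j)
  map_add' _ _ := by ext; simp only [Pi.add_apply, mul_add, Finset.sum_add_distrib]
  map_smul' _ _ := by
    ext; simp only [Pi.smul_apply, smul_eq_mul, RingHom.id_apply, Finset.mul_sum, mul_left_comm]

theorem contractSnd_prodVec (w a b : QVec) :
    contractSnd w (prodVec a b) = (star w ⬝ᵥ b) • a := by
  ext i
  simp only [contractSnd, LinearMap.coe_mk, AddHom.coe_mk, prodVec, dotProduct, Pi.star_apply,
    Pi.smul_apply, smul_eq_mul, Finset.sum_mul]
  exact Finset.sum_congr rfl fun _ _ => by ring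

theorem mulVec_eq_smul_of_kronecker_one_mulVec_eq_smul {Q : Matrix (Fin 2) (Fin 2) ℂ}
    {κ μ ν : ℂ} {c cp d dp : QVec} (hμ : μ ≠ 0) (hν : ν ≠ 0)
    (hd : star d ⬝ᵥ d = 1) (hdp : star dp ⬝ᵥ dp = 1) (hddp : star d ⬝ᵥ dp = 0)
    (h : (Q ⊗ₖ (1 : Matrix (Fin 2) (Fin 2) ℂ)) *ᵥ (μ • prodVec c d + ν • prodVec cp dp)
      = κ • (μ • prodVec c d + ν • prodVec cp dp)) :
    Q *ᵥ c = κ • c ∧ Q *ᵥ cp = κ • cp := by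
  have hdpd : star dp ⬝ᵥ d = 0 := by rw [star_dotProduct, hddp, star_zero]
  rw [mulVec_add, mulVec_smul, mulVec_smul, kronecker_one_mulVec_prodVec,
    kronecker_one_mulVec_prodVec] at h
  constructor
  · have := congrArg (contractSnd d) h
    simp only [map_add, map_smul, contractSnd_prodVec, hd, hddp, one_smul, zero_smul,
      smul_zero, add_zero] at this
    rw [smul_comm κ μ] at this
    exact smul_right_injective _ hμ this
  · have := congrArg (contractSnd dp) h
    simp only [map_add, map_smul, contractSnd_prodVec, hdp, hdpd, one_smul, zero_smul,
      smul_zero, zero_add] at this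
    rw [smul_comm κ ν] at this
    exact smul_right_injective _ hν this

theorem no_local_kraus_discriminates_entangled_general
    (U : Matrix (Fin 2 × Fin 2) (Fin 2 × Fin 2) ℂ)
    (hU : U ∈ Matrix.unitaryGroup (Fin 2 × Fin 2) ℂ)
    (ψ : QVec2) (hψ : star ψ ⬝ᵥ ψ = 1)
    (μ : ℝ) (hμ : μ ∈ Set.Ioo (0 : ℝ) 1)
    (c cp d dp : QVec)
    (hc : star c ⬝ᵥ c = 1) (hcp : star cp ⬝ᵥ cp = 1) (hccp : star c ⬝ᵥ cp = 0)
    (hd : star d ⬝ᵥ d = 1) (hdp : star dp ⬝ᵥ dp = 1) (hddp : star d ⬝ᵥ dp = 0)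
    (hSchmidt : U.mulVec ψ = ((μ : ℂ)) • prodVec c d
        + ((Real.sqrt (1 - μ ^ 2) : ℂ)) • prodVec cp dp)
    (K : Matrix (Fin 2) (Fin 2) ℂ)
    (horth : (((K ⊗ₖ (1 : Matrix (Fin 2) (Fin 2) ℂ)) * outer (U.mulVec ψ)
          * (K ⊗ₖ (1 : Matrix (Fin 2) (Fin 2) ℂ))ᴴ)
        * ((K ⊗ₖ (1 : Matrix (Fin 2) (Fin 2) ℂ))
          * ((1 : Matrix (Fin 2 × Fin 2) (Fin 2 × Fin 2) ℂ) - outer (U.mulVec ψ))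
          * (K ⊗ₖ (1 : Matrix (Fin 2) (Fin 2) ℂ))ᴴ)).trace = 0) :
    ∃ κ : ℂ, Kᴴ * K = κ • (1 : Matrix (Fin 2) (Fin 2) ℂ) := by
  have hφ : star (U *ᵥ ψ) ⬝ᵥ U *ᵥ ψ = 1 := by
    rw [star_mulVec, ← dotProduct_mulVec, mulVec_mulVec, ← star_eq_conjTranspose, hU.1,
      one_mulVec, hψ]
  obtain ⟨κ, hκ⟩ := conjTranspose_mul_self_mulVec_eq_smul_of_trace_eq_zero hφ horth
  rw [conjTranspose_kronecker_one_mul_self, hSchmidt] at hκ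
  have hν : (Real.sqrt (1 - μ ^ 2) : ℂ) ≠ 0 := by
    have : 0 < 1 - μ ^ 2 := by nlinarith [hμ.1, hμ.2]
    exact_mod_cast (Real.sqrt_pos.mpr this).ne'
  obtain ⟨hQc, hQcp⟩ := mulVec_eq_smul_of_kronecker_one_mulVec_eq_smul
    (by exact_mod_cast hμ.1.ne') hν hd hdp hddp hκ
  refine ⟨κ, eq_smul_one_of_mulVec_orthonormal ![c, cp] ?_ (Fin.forall_fin_two.mpr ⟨hQc, hQcp⟩)⟩
  have hcpc : star cp ⬝ᵥ c = 0 := by rw [star_dotProduct, hccp, star_zero]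
  simp only [Fin.forall_fin_two, cons_val_zero, cons_val_one]
  simp [hc, hcp, hccp, hcpc]

/-- If `U|ψ⟩` is entangled (Schmidt coefficient `μ ∈ (0,1)`), then no local Kraus
operator `K` on Alice's side with `K†K` not proportional to the identity can make
`(K⊗I) U|ψ⟩⟨ψ|U† (K⊗I)†` orthogonal to `(K⊗I)(I − U|ψ⟩⟨ψ|U†)(K⊗I)†`:
orthogonality forces `K†K ∝ I`. -/
theorem no_local_kraus_discriminates_entangled
    (U : Matrix (Fin 2 × Fin 2) (Fin 2 × Fin 2) ℂ)
    (hU : U ∈ Matrix.unitaryGroup (Fin 2 × Fin 2) ℂ)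
    (ψ : QVec2) (hψ : star ψ ⬝ᵥ ψ = 1)
    (μ : ℝ) (hμ : μ ∈ Set.Ioo (0 : ℝ) 1)
    (c cp d dp : QVec)
    (hc : star c ⬝ᵥ c = 1) (hcp : star cp ⬝ᵥ cp = 1) (hccp : star c ⬝ᵥ cp = 0)
    (hd : star d ⬝ᵥ d = 1) (hdp : star dp ⬝ᵥ dp = 1) (hddp : star d ⬝ᵥ dp = 0)
    (hSchmidt : U.mulVec ψ = ((μ : ℂ)) • prodVec c d
        + ((Real.sqrt (1 - μ ^ 2) : ℂ)) • prodVec cp dp)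
    (K : Matrix (Fin 2) (Fin 2) ℂ) (hK : K ≠ 0)
    (horth : (((K ⊗ₖ (1 : Matrix (Fin 2) (Fin 2) ℂ)) * outer (U.mulVec ψ)
          * (K ⊗ₖ (1 : Matrix (Fin 2) (Fin 2) ℂ))ᴴ)
        * ((K ⊗ₖ (1 : Matrix (Fin 2) (Fin 2) ℂ))
          * ((1 : Matrix (Fin 2 × Fin 2) (Fin 2 × Fin 2) ℂ) - outer (U.mulVec ψ))
          * (K ⊗ₖ (1 : Matrix (Fin 2) (Fin 2) ℂ))ᴴ)).trace = 0) :
    ∃ κ : ℂ, Kᴴ * K = κ • (1 : Matrix (Fin 2) (Fin 2) ℂ) :=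
  no_local_kraus_discriminates_entangled_general U hU ψ hψ μ hμ c cp d dp hc hcp hccp hd hdp hddp
    hSchmidt K horth
end
end
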